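/- For every real α with 0 < α < 1/2, let ε = 1/10 − α/5 and let b : Fin 5 → ℝ be the bandwidths b 0 = b 1 = 1/2 − 2ε, b 2 = b 3 = 1/2 − ε and b 4 = 4ε, and let r₀ : Fin 4 → Fin 2 be the symmetric assignment r₀ 0 = r₀ 2 = 0, r₀ 1 = r₀ 3 = 1 of the first four flows. Then: (a) r₀ is feasible (each edge load is 1 − 3ε); (b) there exists a feasible assignment of all five flows; (c) for every edge e, the extension of r₀ placing flow 4 on e is not feasible; and (d) every assignment r' : Fin 4 → Fin 2 differing from r₀ at exactly one index has some edge whose load is at least 1 + α. Hence any untimed (one-flow-at-a-time) implementation of the required flow swap oversubscribes some edge by at least α. -/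

import Mathlib

open Finset

/-! Each edge of `r₀` carries `1 - 3ε`, so the new flow `4ε` overflows either edge, while moving
any one old flow (of size at least `1/2 - 2ε`) to the other edge raises that edge's load to at least
`3/2 - 5ε = 1 + α`. -/

/-- The load on edge `e`: the sum of the bandwidths of the flows assigned to `e`. -/
noncomputable def load {ι : Type*} [Fintype ι] {m : ℕ} (b : ι → ℝ) (r : ι → Fin m)
    (e : Fin m) : ℝ :=
  ∑ i ∈ univ.filter (fun i => r i = e), b i

/-- An assignment is feasible if the load of every edge is at most the capacity 1. -/
def Feasible {ι : Type*} [Fintype ι] {m : ℕ} (b : ι → ℝ) (r : ι → Fin m) : Prop :=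
  ∀ e, load b r e ≤ 1

theorem load_eq_sum_ite {ι : Type*} [Fintype ι] {m : ℕ} (b : ι → ℝ) (r : ι → Fin m)
    (e : Fin m) : load b r e = ∑ i, if r i = e then b i else 0 :=
  sum_filter _ _

theorem load_update_of_ne {ι : Type*} [Fintype ι] [DecidableEq ι] {m : ℕ} (b : ι → ℝ)
    {r : ι → Fin m} {i : ι} {e : Fin m} (hi : r i ≠ e) :
    load b (Function.update r i e) e = load b r e + b i := by
  simp only [load_eq_sum_ite]
  rw [← sum_erase_add _ _ (mem_univ i), ← sum_erase_add _ _ (mem_univ i)]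
  have hrest : ∀ j ∈ univ.erase i, Function.update r i e j = r j :=
    fun j hj => Function.update_of_ne (ne_of_mem_erase hj) _ _
  rw [sum_congr rfl fun j hj => by rw [hrest j hj]]
  simp [hi]

theorem load_snoc_self {n m : ℕ} (b : Fin (n + 1) → ℝ) (r : Fin n → Fin m) (e : Fin m) :
    load b (Fin.snoc r e) e = load (fun i => b i.castSucc) r e + b (Fin.last n) := by
  simp [load_eq_sum_ite, Fin.sum_univ_castSucc]

theorem exists_eq_update_of_existsUnique_ne {ι α : Type*} [DecidableEq ι] {r r' : ι → α}
    (h : ∃! i, r' i ≠ r i) : ∃ i e, r i ≠ e ∧ r' = Function.update r i e := by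
  obtain ⟨i, hi, huniq⟩ := h
  refine ⟨i, r' i, Ne.symm hi, funext fun j => ?_⟩
  by_cases hj : j = i
  · subst hj; simp
  · rw [Function.update_of_ne hj]
    by_contra hne
    exact hj (huniq j hne)

theorem stmt7_general (α : ℝ) (hα₁ : α < 1/2) :
    ∀ ε : ℝ, ε = 1/10 - α/5 →
    ∀ b : Fin 5 → ℝ, b = ![1/2 - 2*ε, 1/2 - 2*ε, 1/2 - ε, 1/2 - ε, 4*ε] →
    ∀ b₄ : Fin 4 → ℝ, b₄ = (fun i => b i.castSucc) →
    ∀ r₀ : Fin 4 → Fin 2, r₀ = ![0, 1, 0, 1] →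
      -- (a) `r₀` is feasible; each edge load is `1 - 3ε`
      (Feasible b₄ r₀ ∧ ∀ e : Fin 2, load b₄ r₀ e = 1 - 3*ε) ∧
      -- (b) all five flows admit a feasible assignment
      (∃ r : Fin 5 → Fin 2, Feasible b r) ∧
      -- (c) placing the new flow on either edge, without rerouting, is infeasible
      (∀ e : Fin 2, ¬ Feasible b (Fin.snoc r₀ e)) ∧
      -- (d) any single-flow reroute oversubscribes some edge by at least `α`
      (∀ r' : Fin 4 → Fin 2, (∃! i, r' i ≠ r₀ i) →
        ∃ e : Fin 2, 1 + α ≤ load b₄ r' e) := by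
  intro ε hε b hb b₄ hb₄ r₀ hr₀
  subst hb₄ hr₀
  have hε₀ : 0 < ε := by linarith
  have hload : ∀ e : Fin 2, load (fun i : Fin 4 => b i.castSucc) ![0, 1, 0, 1] e = 1 - 3 * ε := by
    intro e; fin_cases e <;> simp [hb, load_eq_sum_ite, Fin.sum_univ_four] <;> ring
  refine ⟨⟨fun e => by linarith [hload e], hload⟩, ⟨![0, 0, 1, 1, 0], ?_⟩, ?_, ?_⟩
  · intro e; fin_cases e <;> simp [hb, load_eq_sum_ite, Fin.sum_univ_five] <;> linarith
  · intro e hfeas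
    have hoverflow := hfeas e
    rw [load_snoc_self, hload] at hoverflow
    have hnew : b (Fin.last 4) = 4 * ε := by simp [hb]
    linarith
  · intro r' hr'
    obtain ⟨i, e, hi, rfl⟩ := exists_eq_update_of_existsUnique_ne hr'
    refine ⟨e, ?_⟩
    have hb_ge : 1 / 2 - 2 * ε ≤ b i.castSucc := by fin_cases i <;> simp [hb] <;> linarith
    rw [load_update_of_ne _ hi, hload]
    linarith

theorem stmt7 (α : ℝ) (hα₀ : 0 < α) (hα₁ : α < 1/2) :
    ∀ ε : ℝ, ε = 1/10 - α/5 →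
    ∀ b : Fin 5 → ℝ, b = ![1/2 - 2*ε, 1/2 - 2*ε, 1/2 - ε, 1/2 - ε, 4*ε] →
    ∀ b₄ : Fin 4 → ℝ, b₄ = (fun i => b i.castSucc) →
    ∀ r₀ : Fin 4 → Fin 2, r₀ = ![0, 1, 0, 1] →
      -- (a) `r₀` is feasible; each edge load is `1 - 3ε`
      (Feasible b₄ r₀ ∧ ∀ e : Fin 2, load b₄ r₀ e = 1 - 3*ε) ∧
      -- (b) all five flows admit a feasible assignment
      (∃ r : Fin 5 → Fin 2, Feasible b r) ∧
      -- (c) placing the new flow on either edge, without rerouting, is infeasible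
      (∀ e : Fin 2, ¬ Feasible b (Fin.snoc r₀ e)) ∧
      -- (d) any single-flow reroute oversubscribes some edge by at least `α`
      (∀ r' : Fin 4 → Fin 2, (∃! i, r' i ≠ r₀ i) →
        ∃ e : Fin 2, 1 + α ≤ load b₄ r' e) :=
  stmt7_general α hα₁
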